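/- arXiv:2305.01635 — 4 statements merged into one kernel-verified Lean document; each statement's English description precedes it below -/
import Mathlib

section
/- Let G be a linearly ordered abelian group, A a convex subgroup, H = G/A with quotient map ρ : G → H, and α : H → G a transversal map with α(0) = 0; let β(h,h') = α(h+h') − α(h) − α(h') (which takes values in A). Then the map f : A × H → G defined by f(z,h) = z + α(h) is a bijection satisfying f((z,h) ⊕ (z',h')) = f(z,h) + f(z',h') for the twisted addition (z,h) ⊕ (z',h') = (z + z' − β(h,h'), h + h'), and f is order-preserving from the order '(z,h) ≤ (z',h') iff h < h' or (h = h' and z ≤ z')' to the order of G. Hence G_β is isomorphic to G as ordered abelian groups. -/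
/-!
Every `g : G` decomposes uniquely as `g = (g - α (ρ g)) + α (ρ g)` with first summand in
`A = ker ρ`, which gives bijectivity. The cocycle identity for `β` is exactly what makes the
twisted addition correspond to addition in `G`. Order preservation splits into two cases: if the
`H`-components differ, the strict inequality in `H` lifts to `G` because `ρ` is monotone and
`G` is linearly ordered; if they agree, it is translation invariance of `≤` in `G`.
-/

namespace Transversal

variable {G H : Type*} [AddCommGroup G] {A : AddSubgroup G} {α : H → G}

def sum (A : AddSubgroup G) (α : H → G) (p : A × H) : G := p.1 + α p.2

lemma sum_le_sum_of_eq [PartialOrder G] [IsOrderedAddMonoid G] {p q : A × H} (h2 : p.2 = q.2)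
    (h1 : p.1 ≤ q.1) : sum A α p ≤ sum A α q := by
  rw [sum, sum, h2]
  exact add_le_add_left (Subtype.coe_le_coe.mpr h1) _

variable [AddCommGroup H] {ρ : G →+ H}

lemma map_sum (hA : A ≤ ρ.ker) (hα : ∀ h, ρ (α h) = h) (p : A × H) : ρ (sum A α p) = p.2 := by
  rw [sum, map_add, hA p.1.2, hα, zero_add]

lemma sum_injective (hA : A ≤ ρ.ker) (hα : ∀ h, ρ (α h) = h) : Function.Injective (sum A α) := by
  intro p q hpq
  have h2 : p.2 = q.2 := by rw [← map_sum hA hα p, ← map_sum hA hα q, hpq]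
  have h1 : (p.1 : G) = q.1 := by
    rw [sum, sum, h2] at hpq
    exact add_right_cancel hpq
  exact Prod.ext (Subtype.ext h1) h2

lemma sum_surjective (hA : ρ.ker ≤ A) (hα : ∀ h, ρ (α h) = h) :
    Function.Surjective (sum A α) := by
  intro g
  have hmem : g - α (ρ g) ∈ A := hA (by rw [AddMonoidHom.mem_ker, map_sub, hα, sub_self])
  exact ⟨(⟨g - α (ρ g), hmem⟩, ρ g), sub_add_cancel g _⟩

lemma sum_twisted_add (β : H → H → A) (hβ : ∀ h h', (β h h' : G) = α (h + h') - α h - α h')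
    (p q : A × H) :
    sum A α (p.1 + q.1 - β p.2 q.2, p.2 + q.2) = sum A α p + sum A α q := by
  simp only [sum, AddSubgroup.coe_sub, AddSubgroup.coe_add, hβ]
  abel

lemma sum_le_sum_of_lt [LinearOrder G] [IsOrderedAddMonoid G] [Preorder H]
    (hρ : Monotone ρ) (hA : A ≤ ρ.ker) (hα : ∀ h, ρ (α h) = h) {p q : A × H} (h : p.2 < q.2) :
    sum A α p ≤ sum A α q :=
  (hρ.reflect_lt (by rwa [map_sum hA hα, map_sum hA hα])).le

end Transversal

open Transversal in
theorem twisted_sum_group_iso_general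
    {G H : Type*} [AddCommGroup G] [LinearOrder G] [IsOrderedAddMonoid G]
    [AddCommGroup H] [LinearOrder H] [IsOrderedAddMonoid H]
    (A : AddSubgroup G)
    (ρ : G →+ H) (hρmono : Monotone ρ)
    (hker : ∀ g : G, ρ g = 0 ↔ g ∈ A)
    (α : H → G) (hα : ∀ h : H, ρ (α h) = h)
    (β : H → H → A)
    (hβ : ∀ h h' : H, (β h h' : G) = α (h + h') - α h - α h')
    (add : A × H → A × H → A × H)
    (hadd : ∀ p q : A × H, add p q = (p.1 + q.1 - β p.2 q.2, p.2 + q.2))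
    (le : A × H → A × H → Prop)
    (hle : ∀ p q : A × H, le p q ↔ (p.2 < q.2 ∨ (p.2 = q.2 ∧ p.1 ≤ q.1)))
    (f : A × H → G)
    (hf : ∀ p : A × H, f p = (p.1 : G) + α p.2) :
    Function.Bijective f ∧
    (∀ p q : A × H, f (add p q) = f p + f q) ∧
    (∀ p q : A × H, le p q → f p ≤ f q) := by
  obtain rfl : f = sum A α := funext hf
  have hA : A ≤ ρ.ker := fun g hg => (hker g).mpr hg
  have hA' : ρ.ker ≤ A := fun g hg => (hker g).mp hg
  refine ⟨⟨sum_injective hA hα, sum_surjective hA' hα⟩, fun p q => ?_, fun p q hpq => ?_⟩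
  · rw [hadd, sum_twisted_add β hβ]
  · rcases (hle p q).mp hpq with hlt | ⟨h2, h1⟩
    · exact sum_le_sum_of_lt hρmono hA hα hlt
    · exact sum_le_sum_of_eq h2 h1

/-- For `G` a linearly ordered abelian group, `A` a convex subgroup,
`H = G/A` with quotient map `ρ`, and `α : H → G` a transversal map with `α 0 = 0`,
the cocycle `β` takes values in `A` and the map `f (z, h) = z + α h` is a bijection
from `A × H` to `G`, additive for the twisted addition
`(z,h) ⊕ (z',h') = (z + z' - β h h', h + h')`, and order-preserving from the order
`(z,h) ≤ (z',h') ↔ h < h' ∨ (h = h' ∧ z ≤ z')` to the order of `G`.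
Hence `G_β ≅ G` as ordered abelian groups. -/
theorem twisted_sum_group_iso
    {G H : Type*} [AddCommGroup G] [LinearOrder G] [IsOrderedAddMonoid G]
    [AddCommGroup H] [LinearOrder H] [IsOrderedAddMonoid H]
    (A : AddSubgroup G)
    (hconv : ∀ a b g : G, a ∈ A → b ∈ A → a ≤ g → g ≤ b → g ∈ A)
    (ρ : G →+ H) (hρsurj : Function.Surjective ρ) (hρmono : Monotone ρ)
    (hker : ∀ g : G, ρ g = 0 ↔ g ∈ A)
    (α : H → G) (hα : ∀ h : H, ρ (α h) = h) (hα0 : α 0 = 0)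
    (β : H → H → A)
    (hβ : ∀ h h' : H, (β h h' : G) = α (h + h') - α h - α h')
    (add : A × H → A × H → A × H)
    (hadd : ∀ p q : A × H, add p q = (p.1 + q.1 - β p.2 q.2, p.2 + q.2))
    (le : A × H → A × H → Prop)
    (hle : ∀ p q : A × H, le p q ↔ (p.2 < q.2 ∨ (p.2 = q.2 ∧ p.1 ≤ q.1)))
    (f : A × H → G)
    (hf : ∀ p : A × H, f p = (p.1 : G) + α p.2) :
    Function.Bijective f ∧
    (∀ p q : A × H, f (add p q) = f p + f q) ∧
    (∀ p q : A × H, le p q → f p ≤ f q) :=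
  twisted_sum_group_iso_general A ρ hρmono hker α hα β hβ add hadd le hle f hf
end

section
/- Let H and A be linearly ordered abelian groups, K a field, β : H × H → A a normalized symmetric 2-cocycle, and σ : A → Kˣ a homomorphism from the additive group A to the multiplicative group of units of K. Then the twisted multiplication ⋆ on HahnSeries H K, given by (a ⋆ b).coeff(l) = Σ_{h+h'=l} (a.coeff h)·(b.coeff h')·σ(−β(h,h')), is associative and commutative, distributes over the coefficientwise addition, has the series with single coefficient 1 at exponent 0 as multiplicative identity, and every nonzero element has a multiplicative inverse; hence HahnSeries H K with coefficientwise addition and ⋆ is a field, denoted K(t^H,β). -/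
/-- The twisted multiplication on Hahn series determined by a 2-cocycle
`β : H × H → A` and a multiplicative section `σ : A → Kˣ`:
`(a ⋆ b).coeff l = ∑_{h + h' = l} a.coeff h * b.coeff h' * σ (-β h h')`. -/
noncomputable def tmul {K H A : Type*} [Field K]
    [AddCommGroup H] [LinearOrder H] [IsOrderedAddMonoid H] [AddCommGroup A]
    (σ : A → Kˣ) (β : H → H → A) (x y : HahnSeries H K) : HahnSeries H K where
  coeff l := ∑ ij ∈ Finset.antidiagonal x.isPWO_support y.isPWO_support l,
      x.coeff ij.1 * y.coeff ij.2 * (σ (-β ij.1 ij.2) : K)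
  isPWO_support' := by
    refine Set.IsPWO.mono (x.isPWO_support.add y.isPWO_support) ?_
    intro l hl
    obtain ⟨ij, hij, -⟩ :=
      Finset.exists_ne_zero_of_sum_ne_zero (Function.mem_support.mp hl)
    rw [Finset.mem_antidiagonal] at hij
    exact Set.mem_add.mpr ⟨ij.1, hij.1, ij.2, hij.2.1, hij.2.2⟩

/-! Associativity is the cocycle identity: it makes `σ (-β h h') * σ (-β (h + h') h'')` independent
of the bracketing of `h + h' + h''`. For inverses, a nonzero `x` of order `r` times a suitable
monomial at `-r` has the form `1 - y` with `y` supported in the positive cone; then, as for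
ordinary Hahn series, the twisted geometric series `∑ y ⋆ ⋯ ⋆ y` is summable and inverts `1 - y`. -/

namespace TwistedHahnSeries

open Finset HahnSeries Pointwise

variable {K H A : Type*} [Field K] [AddCommGroup H] [AddCommGroup A] (σ : A → Kˣ) (β : H → H → A)

theorem sigma_zero (hσ : ∀ a a', σ (a + a') = σ a * σ a') : σ 0 = 1 := by
  simpa using hσ 0 0

theorem sigma_neg_cocycle (hσ : ∀ a a', σ (a + a') = σ a * σ a')
    (hβ : ∀ h h' h'', β h h' + β (h + h') h'' = β h' h'' + β h (h' + h'')) (h h' h'' : H) :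
    (σ (-β h h') * σ (-β (h + h') h'') : K) = σ (-β h' h'') * σ (-β h (h' + h'')) := by
  rw [← Units.val_mul, ← Units.val_mul, ← hσ, ← hσ, ← neg_add, ← neg_add, hβ]

variable [LinearOrder H] [IsOrderedAddMonoid H]

theorem coeff_tmul (x y : HahnSeries H K) (l : H) :
    (tmul σ β x y).coeff l = ∑ ij ∈ antidiagonal x.isPWO_support y.isPWO_support l,
      x.coeff ij.1 * y.coeff ij.2 * (σ (-β ij.1 ij.2) : K) := rfl

theorem coeff_tmul_eq_sum_of_subset {x y : HahnSeries H K} {s t : Set H} (hs : s.IsPWO)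
    (ht : t.IsPWO) (hxs : x.support ⊆ s) (hyt : y.support ⊆ t) (l : H) :
    (tmul σ β x y).coeff l = ∑ ij ∈ antidiagonal hs ht l,
      x.coeff ij.1 * y.coeff ij.2 * (σ (-β ij.1 ij.2) : K) := by
  refine sum_subset ((antidiagonal_mono_left hxs).trans (antidiagonal_mono_right hyt)) ?_
  intro ij hst hxy
  obtain ⟨-, -, hl⟩ := mem_antidiagonal.mp hst
  by_cases hx : x.coeff ij.1 = 0
  · simp [hx]
  by_cases hy : y.coeff ij.2 = 0
  · simp [hy]
  exact absurd (mem_antidiagonal.mpr ⟨hx, hy, hl⟩) hxy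

theorem support_tmul_subset (x y : HahnSeries H K) :
    (tmul σ β x y).support ⊆ x.support + y.support := by
  intro l hl
  obtain ⟨ij, hij, -⟩ := exists_ne_zero_of_sum_ne_zero (Function.mem_support.mp hl)
  obtain ⟨hi, hj, rfl⟩ := mem_antidiagonal.mp hij
  exact Set.add_mem_add hi hj

theorem tmul_add (x y z : HahnSeries H K) :
    tmul σ β x (y + z) = tmul σ β x y + tmul σ β x z := by
  ext l
  have hyz := y.isPWO_support.union z.isPWO_support
  rw [coeff_add, coeff_tmul_eq_sum_of_subset σ β x.isPWO_support hyz subset_rfl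
      (support_add_subset y z),
    coeff_tmul_eq_sum_of_subset σ β x.isPWO_support hyz subset_rfl Set.subset_union_left,
    coeff_tmul_eq_sum_of_subset σ β x.isPWO_support hyz subset_rfl Set.subset_union_right,
    ← sum_add_distrib]
  exact sum_congr rfl fun ij _ => by rw [coeff_add]; ring

theorem add_tmul (x y z : HahnSeries H K) :
    tmul σ β (x + y) z = tmul σ β x z + tmul σ β y z := by
  ext l
  have hxy := x.isPWO_support.union y.isPWO_support
  rw [coeff_add, coeff_tmul_eq_sum_of_subset σ β hxy z.isPWO_support
      (support_add_subset x y) subset_rfl,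
    coeff_tmul_eq_sum_of_subset σ β hxy z.isPWO_support Set.subset_union_left subset_rfl,
    coeff_tmul_eq_sum_of_subset σ β hxy z.isPWO_support Set.subset_union_right subset_rfl,
    ← sum_add_distrib]
  exact sum_congr rfl fun ij _ => by rw [coeff_add]; ring

theorem sub_tmul (x y z : HahnSeries H K) :
    tmul σ β (x - y) z = tmul σ β x z - tmul σ β y z :=
  eq_sub_of_add_eq (by rw [← add_tmul, sub_add_cancel])

theorem tmul_comm (hβ : ∀ h h', β h h' = β h' h) (x y : HahnSeries H K) :
    tmul σ β x y = tmul σ β y x := by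
  ext l
  refine sum_equiv (Equiv.prodComm H H) (fun _ => swap_mem_antidiagonal.symm) fun ij _ => ?_
  simp only [Equiv.prodComm_apply, Prod.fst_swap, Prod.snd_swap, hβ ij.1 ij.2]
  ring

theorem coeff_single_tmul (b : H) (d : K) (x : HahnSeries H K) (l : H) :
    (tmul σ β (single b d) x).coeff l = d * x.coeff (l - b) * (σ (-β b (l - b)) : K) := by
  rw [coeff_tmul_eq_sum_of_subset σ β (Set.isPWO_singleton b) x.isPWO_support
    support_single_subset subset_rfl, sum_eq_single (b, l - b)]
  · rw [coeff_single_same]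
  · rintro ⟨i, j⟩ hij hne
    obtain ⟨rfl : i = b, -, rfl⟩ := mem_antidiagonal.mp hij
    simp at hne
  · intro hnot
    have hx : x.coeff (l - b) = 0 := by
      by_contra hx
      exact hnot (mem_antidiagonal.mpr ⟨rfl, hx, add_sub_cancel b l⟩)
    rw [hx, mul_zero, zero_mul]

theorem single_zero_one_tmul (hσ : ∀ a a', σ (a + a') = σ a * σ a') (hβ : ∀ h, β 0 h = 0)
    (x : HahnSeries H K) : tmul σ β (single 0 1) x = x := by
  ext l
  rw [coeff_single_tmul, sub_zero, hβ, neg_zero, sigma_zero σ hσ, Units.val_one, one_mul, mul_one]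

theorem tmul_assoc (hσ : ∀ a a', σ (a + a') = σ a * σ a')
    (hβ : ∀ h h' h'', β h h' + β (h + h') h'' = β h' h'' + β h (h' + h''))
    (x y z : HahnSeries H K) :
    tmul σ β (tmul σ β x y) z = tmul σ β x (tmul σ β y z) := by
  ext l
  rw [coeff_tmul_eq_sum_of_subset σ β (x.isPWO_support.add y.isPWO_support) z.isPWO_support
      (support_tmul_subset σ β x y) subset_rfl,
    coeff_tmul_eq_sum_of_subset σ β x.isPWO_support (y.isPWO_support.add z.isPWO_support)
      subset_rfl (support_tmul_subset σ β y z)]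
  simp only [coeff_tmul, sum_mul, mul_sum, sum_sigma']
  apply sum_nbij' (fun ⟨⟨_i, j⟩, ⟨k, l⟩⟩ ↦ ⟨(k, l + j), (l, j)⟩)
    (fun ⟨⟨i, _j⟩, ⟨k, l⟩⟩ ↦ ⟨(i + k, l), (i, k)⟩)
  case h =>
    rintro ⟨⟨i, j⟩, ⟨k, l⟩⟩ hmem
    obtain rfl : k + l = i := (mem_antidiagonal.mp (mem_sigma.mp hmem).2).2.2
    linear_combination (x.coeff k * y.coeff l * z.coeff j) * sigma_neg_cocycle σ β hσ hβ k l j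
  all_goals aesop (add safe Set.add_mem_add) (add simp [add_assoc])

variable {α : Type*}

noncomputable def tmulFamily (x : HahnSeries H K) (s : SummableFamily H K α) :
    SummableFamily H K α where
  toFun a := tmul σ β x (s a)
  isPWO_iUnion_support' := by
    refine (x.isPWO_support.add s.isPWO_iUnion_support).mono (Set.iUnion_subset fun a => ?_)
    exact (support_tmul_subset σ β x (s a)).trans
      (Set.add_subset_add_left (Set.subset_iUnion (fun a => (s a).support) a))
  finite_co_support' g := by
    refine ((antidiagonal x.isPWO_support s.isPWO_iUnion_support g).finite_toSet.biUnion
      fun ij _ => s.finite_co_support ij.2).subset fun a ha => ?_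
    obtain ⟨ij, hij, hne⟩ := exists_ne_zero_of_sum_ne_zero ha
    obtain ⟨hi, hj, hl⟩ := mem_antidiagonal.mp hij
    exact Set.mem_biUnion (mem_antidiagonal.mpr ⟨hi, Set.mem_iUnion.2 ⟨a, hj⟩, hl⟩) hj

theorem tmulFamily_apply (x : HahnSeries H K) (s : SummableFamily H K α) (a : α) :
    tmulFamily σ β x s a = tmul σ β x (s a) := rfl

theorem tmul_hsum (x : HahnSeries H K) (s : SummableFamily H K α) :
    tmul σ β x s.hsum = (tmulFamily σ β x s).hsum := by
  ext g
  have hs := s.isPWO_iUnion_support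
  simp_rw [SummableFamily.coeff_hsum, tmulFamily_apply,
    coeff_tmul_eq_sum_of_subset σ β x.isPWO_support hs subset_rfl
      (Set.subset_iUnion (fun a => (s a).support) _),
    coeff_tmul_eq_sum_of_subset σ β x.isPWO_support hs subset_rfl
      SummableFamily.support_hsum_subset,
    SummableFamily.coeff_hsum, mul_finsum, finsum_mul]
  exact sum_finsum_comm _ _ fun ij _ =>
    (s.finite_co_support ij.2).subset fun a ha h0 => ha (by simp only [h0, mul_zero, zero_mul])

noncomputable def tpow (y : HahnSeries H K) : ℕ → HahnSeries H K
  | 0 => single 0 1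
  | n + 1 => tmul σ β y (tpow y n)

theorem support_tpow_subset_closure (y : HahnSeries H K) (n : ℕ) :
    (tpow σ β y n).support ⊆ AddSubmonoid.closure y.support := by
  induction n with
  | zero => exact support_single_subset.trans (Set.singleton_subset_iff.mpr (zero_mem _))
  | succ n ih =>
    exact (support_tmul_subset σ β y _).trans (Set.add_subset_iff.mpr fun a ha b hb =>
      add_mem (AddSubmonoid.subset_closure ha) (ih hb))

variable {y : HahnSeries H K}

theorem isPWO_iUnion_support_tpow (hy : ∀ g ∈ y.support, 0 < g) :
    (⋃ n, (tpow σ β y n).support).IsPWO :=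
  (y.isPWO_support.addSubmonoid_closure fun g hg => (hy g hg).le).mono
    (Set.iUnion_subset (support_tpow_subset_closure σ β y))

theorem finite_co_support_tpow (hy : ∀ g ∈ y.support, 0 < g) (g : H) :
    {n | (tpow σ β y n).coeff g ≠ 0}.Finite := by
  have hpwo := isPWO_iUnion_support_tpow σ β hy
  by_cases hg : g ∈ ⋃ n, (tpow σ β y n).support
  swap
  · exact Set.finite_empty.subset fun n hn => hg (Set.mem_iUnion.2 ⟨n, hn⟩)
  -- well-founded induction on `g`: `y ⋆ y^n` has a nonzero coefficient at `c` only where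
  -- `y^n` has one at some `c - h` with `h ∈ y.support`, and `c - h < c`
  apply hpwo.isWF.induction hg
  intro c _ ih
  refine ((((antidiagonal y.isPWO_support hpwo c).finite_toSet.biUnion fun ij hij =>
    ih ij.2 (mem_antidiagonal.1 hij).2.1 ?_).image Nat.succ).union
      (Set.finite_singleton 0)).subset ?_
  · obtain ⟨hi, -, rfl⟩ := mem_antidiagonal.1 (mem_coe.1 hij)
    exact lt_add_of_pos_left ij.2 (hy _ hi)
  · rintro (_ | n) hn
    · exact Set.mem_union_right _ rfl
    · obtain ⟨i, hi, j, hj, rfl⟩ := support_tmul_subset σ β _ _ hn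
      exact Set.mem_union_left _ ⟨n, Set.mem_biUnion (x := (i, j))
        (mem_antidiagonal.2 ⟨hi, Set.mem_iUnion.2 ⟨n, hj⟩, rfl⟩) hj, rfl⟩

variable (hy : ∀ g ∈ y.support, 0 < g)

noncomputable def tpowers : SummableFamily H K ℕ where
  toFun := tpow σ β y
  isPWO_iUnion_support' := isPWO_iUnion_support_tpow σ β hy
  finite_co_support' := finite_co_support_tpow σ β hy

theorem embDomain_succ_tmulFamily_tpowers :
    (tmulFamily σ β y (tpowers σ β hy)).embDomain ⟨Nat.succ, Nat.succ_injective⟩ =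
      tpowers σ β hy - .ofFinsupp (Finsupp.single 0 (single 0 1)) := by
  ext1 n
  cases n with
  | zero => simp [tpowers, tpow]
  | succ n =>
    refine (SummableFamily.embDomain_image _ ⟨Nat.succ, Nat.succ_injective⟩ (a := n)).trans ?_
    simp [tpowers, tpow, tmulFamily_apply]

theorem tmul_hsum_tpowers :
    tmul σ β y (tpowers σ β hy).hsum = (tpowers σ β hy).hsum - single 0 1 := by
  rw [tmul_hsum, ← SummableFamily.hsum_embDomain _ ⟨Nat.succ, Nat.succ_injective⟩,
    embDomain_succ_tmulFamily_tpowers, SummableFamily.hsum_sub, SummableFamily.hsum_ofFinsupp,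
    Finsupp.sum_single_index rfl, id]

theorem one_sub_tmul_hsum_tpowers (hσ : ∀ a a', σ (a + a') = σ a * σ a') (hβ : ∀ h, β 0 h = 0) :
    tmul σ β (single 0 1 - y) (tpowers σ β hy).hsum = single 0 1 := by
  rw [sub_tmul, single_zero_one_tmul σ β hσ hβ, tmul_hsum_tpowers, sub_sub_cancel]

theorem exists_pos_support_one_sub_single_tmul {x : HahnSeries H K} (hx : x ≠ 0) :
    ∃ c : K, ∀ g ∈ (single 0 1 - tmul σ β (single (-x.order) c) x).support, 0 < g := by
  refine ⟨(x.coeff x.order * σ (-β (-x.order) x.order))⁻¹, fun g hg => ?_⟩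
  by_contra! hg0
  apply hg
  rw [coeff_sub, coeff_single_tmul, sub_neg_eq_add]
  rcases hg0.lt_or_eq with hneg | rfl
  · rw [coeff_single_of_ne hneg.ne, coeff_eq_zero_of_lt_order (add_lt_of_neg_left _ hneg)]
    simp
  · have hc : x.coeff x.order * σ (-β (-x.order) x.order) ≠ 0 :=
      mul_ne_zero (mt coeff_order_eq_zero.mp hx) (Units.ne_zero _)
    rw [coeff_single_same, zero_add, mul_assoc, inv_mul_cancel₀ hc, sub_self]

theorem exists_tmul_eq_single_zero_one (hσ : ∀ a a', σ (a + a') = σ a * σ a')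
    (hβsymm : ∀ h h', β h h' = β h' h) (hβ0 : ∀ h, β 0 h = 0)
    (hβcoc : ∀ h h' h'', β h h' + β (h + h') h'' = β h' h'' + β h (h' + h''))
    {x : HahnSeries H K} (hx : x ≠ 0) : ∃ z, tmul σ β x z = single 0 1 := by
  obtain ⟨c, hy⟩ := exists_pos_support_one_sub_single_tmul σ β hx
  refine ⟨tmul σ β (single (-x.order) c) (tpowers σ β hy).hsum, ?_⟩
  rw [← tmul_assoc σ β hσ hβcoc, tmul_comm σ β hβsymm x]
  simpa only [sub_sub_cancel] using one_sub_tmul_hsum_tpowers σ β hy hσ hβ0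

end TwistedHahnSeries

theorem twisted_hahn_series_field_general
    {K H A : Type*} [Field K]
    [AddCommGroup H] [LinearOrder H] [IsOrderedAddMonoid H]
    [AddCommGroup A]
    (σ : A → Kˣ) (hσ : ∀ a a' : A, σ (a + a') = σ a * σ a')
    (β : H → H → A)
    (hβsymm : ∀ h h' : H, β h h' = β h' h)
    (hβnorm : ∀ h : H, β h 0 = 0 ∧ β 0 h = 0)
    (hβcoc : ∀ h h' h'' : H, β h h' + β (h + h') h'' = β h' h'' + β h (h' + h'')) :
    (∀ a b c : HahnSeries H K, tmul σ β (tmul σ β a b) c = tmul σ β a (tmul σ β b c)) ∧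
    (∀ a b : HahnSeries H K, tmul σ β a b = tmul σ β b a) ∧
    (∀ a b c : HahnSeries H K, tmul σ β a (b + c) = tmul σ β a b + tmul σ β a c) ∧
    (∀ a : HahnSeries H K,
      tmul σ β a (HahnSeries.single (0 : H) (1 : K)) = a ∧
      tmul σ β (HahnSeries.single (0 : H) (1 : K)) a = a) ∧
    (∀ a : HahnSeries H K, a ≠ 0 →
      ∃ b : HahnSeries H K, tmul σ β a b = HahnSeries.single (0 : H) (1 : K)) := by
  have hβ0 : ∀ h, β 0 h = 0 := fun h => (hβnorm h).2
  have one_tmul := TwistedHahnSeries.single_zero_one_tmul σ β hσ hβ0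
  refine ⟨TwistedHahnSeries.tmul_assoc σ β hσ hβcoc, TwistedHahnSeries.tmul_comm σ β hβsymm,
    TwistedHahnSeries.tmul_add σ β, fun a => ⟨?_, one_tmul a⟩,
    fun a ha => TwistedHahnSeries.exists_tmul_eq_single_zero_one σ β hσ hβsymm hβ0 hβcoc ha⟩
  rw [TwistedHahnSeries.tmul_comm σ β hβsymm, one_tmul]

/-- For linearly ordered abelian groups `H`, `A`, a field `K`,
a normalized symmetric 2-cocycle `β : H × H → A` and a homomorphism
`σ : A → Kˣ`, the twisted multiplication on `HahnSeries H K` is associative,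
commutative, distributes over the (coefficientwise) addition, has
`single 0 1` as multiplicative identity, and every nonzero element has a
multiplicative inverse; hence the twisted Hahn series `K(t^H, β)` form a field. -/
theorem twisted_hahn_series_field
    {K H A : Type*} [Field K]
    [AddCommGroup H] [LinearOrder H] [IsOrderedAddMonoid H]
    [AddCommGroup A] [LinearOrder A] [IsOrderedAddMonoid A]
    (σ : A → Kˣ) (hσ : ∀ a a' : A, σ (a + a') = σ a * σ a')
    (β : H → H → A)
    (hβsymm : ∀ h h' : H, β h h' = β h' h)
    (hβnorm : ∀ h : H, β h 0 = 0 ∧ β 0 h = 0)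
    (hβcoc : ∀ h h' h'' : H, β h h' + β (h + h') h'' = β h' h'' + β h (h' + h'')) :
    (∀ a b c : HahnSeries H K, tmul σ β (tmul σ β a b) c = tmul σ β a (tmul σ β b c)) ∧
    (∀ a b : HahnSeries H K, tmul σ β a b = tmul σ β b a) ∧
    (∀ a b c : HahnSeries H K, tmul σ β a (b + c) = tmul σ β a b + tmul σ β a c) ∧
    (∀ a : HahnSeries H K,
      tmul σ β a (HahnSeries.single (0 : H) (1 : K)) = a ∧
      tmul σ β (HahnSeries.single (0 : H) (1 : K)) a = a) ∧
    (∀ a : HahnSeries H K, a ≠ 0 →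
      ∃ b : HahnSeries H K, tmul σ β a b = HahnSeries.single (0 : H) (1 : K)) :=
  twisted_hahn_series_field_general σ hσ β hβsymm hβnorm hβcoc
end

section
/- Let H and A be linearly ordered abelian groups, (K,v) a field with additive valuation with value group A and cross-section σ : A → Kˣ, and β : H × H → A a normalized symmetric 2-cocycle. Equip the twisted Hahn series field K(t^H,β) with the valuation val(f) = (v(f.coeff h₀), h₀), h₀ = min supp(f), with values in A × H ordered by (z,h) ≤ (z',h') iff h < h' or (h = h' and z ≤ z'). If (K,v) is ω-pseudo complete, then (K(t^H,β), val) is ω-pseudo complete: every pseudo-Cauchy sequence (c_i)_{i∈ℕ} of twisted Hahn series has a pseudo-limit in K(t^H,β). -/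
/-- The minimum of the support of a nonzero Hahn series. -/
noncomputable def minSupp {K H : Type*} [Field K] [AddCommGroup H] [LinearOrder H] [IsOrderedAddMonoid H]
    (f : HahnSeries H K) (hf : f ≠ 0) : H :=
  f.isWF_support.min (HahnSeries.support_nonempty_iff.mpr hf)

/-- The valuation `val f = (v (f.coeff h₀), h₀)`, `h₀ = min supp f`. -/
noncomputable def tval {K H A : Type*} [Field K] [AddCommGroup H] [LinearOrder H] [IsOrderedAddMonoid H]
    [AddCommGroup A] [LinearOrder A] [IsOrderedAddMonoid A]
    (v : K → WithTop A) (f : HahnSeries H K) (hf : f ≠ 0) : WithTop A × H :=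
  (v (f.coeff (minSupp f hf)), minSupp f hf)

/-- The strict order `(z,h) < (z',h') ↔ h < h' ∨ (h = h' ∧ z < z')` on values. -/
def pLt {A H : Type*} [AddCommGroup A] [LinearOrder A] [IsOrderedAddMonoid A] [AddCommGroup H] [LinearOrder H] [IsOrderedAddMonoid H]
    (p q : WithTop A × H) : Prop :=
  p.2 < q.2 ∨ (p.2 = q.2 ∧ p.1 < q.1)

open Classical in
/-- The valuation extended by `val 0 = ∞`. -/
noncomputable def Val {K H A : Type*} [Field K] [AddCommGroup H] [LinearOrder H] [IsOrderedAddMonoid H]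
    [AddCommGroup A] [LinearOrder A] [IsOrderedAddMonoid A]
    (v : K → WithTop A) (f : HahnSeries H K) : WithTop (WithTop A × H) :=
  if hf : f = 0 then ⊤ else ((tval v f hf : WithTop A × H) : WithTop (WithTop A × H))

/-- Extension of a strict order to `WithTop`, with `⊤` the largest element. -/
def vLt {P : Type*} (lt : P → P → Prop) (x y : WithTop P) : Prop :=
  x ≠ ⊤ ∧ (y = ⊤ ∨ ∃ p q : P, x = (p : WithTop P) ∧ y = (q : WithTop P) ∧ lt p q)


section PseudoCauchy

variable {G Γ : Type*}

def IsPseudoCauchyFrom [Sub G] [LT Γ] (w : G → Γ) (c : ℕ → G) (N : ℕ) : Prop :=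
  ∀ i j k, N ≤ i → i < j → j < k → w (c j - c i) < w (c k - c j)

def IsPseudoCauchy [Sub G] [LT Γ] (w : G → Γ) (c : ℕ → G) : Prop :=
  ∃ N, IsPseudoCauchyFrom w c N

def IsPseudoLimit [Sub G] [LT Γ] (w : G → Γ) (c : ℕ → G) (b : G) : Prop :=
  ∃ N, ∀ i j, N ≤ i → i < j → w (b - c i) < w (b - c j)

variable [AddCommGroup G] [LT Γ] {w : G → Γ} {c : ℕ → G} {N i j : ℕ}

theorem IsPseudoCauchyFrom.apply_sub_eq (hc : IsPseudoCauchyFrom w c N)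
    (hw : ∀ x y, w x < w y → w (x + y) = w x) (hi : N ≤ i) (hij : i < j) :
    w (c j - c i) = w (c (i + 1) - c i) := by
  rcases (Nat.succ_le_of_lt hij).eq_or_lt with rfl | hj
  · rfl
  rw [show c j - c i = (c (i + 1) - c i) + (c j - c (i + 1)) by abel]
  exact hw _ _ (hc i (i + 1) j hi (lt_add_one i) hj)

theorem IsPseudoCauchyFrom.apply_sub_succ_lt (hc : IsPseudoCauchyFrom w c N)
    (hw : ∀ x y, w x < w y → w (x + y) = w x) (hi : N ≤ i) (hij : i < j) :
    w (c (i + 1) - c i) < w (c (j + 1) - c j) :=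
  hc.apply_sub_eq hw hi hij ▸ hc i j (j + 1) hi hij (lt_add_one j)

end PseudoCauchy

theorem WithTop.apply_one_eq_zero_of_map_mul {R A : Type*} [MulOneClass R]
    [AddLeftCancelMonoid A] {v : R → WithTop A} (h1 : v 1 ≠ ⊤)
    (hmul : ∀ x y, v (x * y) = v x + v y) : v 1 = 0 := by
  obtain ⟨a, ha⟩ := WithTop.ne_top_iff_exists.1 h1
  have h := hmul 1 1
  rw [one_mul, ← ha, ← WithTop.coe_add, WithTop.coe_inj, left_eq_add] at h
  rw [← ha, h, WithTop.coe_zero]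

theorem vLt_map_iff {P Q : Type*} [LT Q] {lt : P → P → Prop} (e : Q → P)
    (he : ∀ p q, lt (e p) (e q) ↔ p < q) (x y : WithTop Q) :
    vLt lt (x.map e) (y.map e) ↔ x < y := by
  cases x <;> cases y <;> simp [vLt, he]

namespace HahnSeries

variable {Γ R Γ₀ : Type*} [LinearOrder Γ]

section Zero

variable [Zero R]

theorem orderTop_eq_of_coeff_ne_zero {f : HahnSeries Γ R} {g : Γ} (hg : f.coeff g ≠ 0)
    (h : ∀ k < g, f.coeff k = 0) : f.orderTop = g :=
  le_antisymm (orderTop_le_of_coeff_ne_zero hg)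
    (le_orderTop_iff_forall.2 fun k hk => h k (WithTop.coe_lt_coe.1 hk))

/-- The glued support is well-founded: a descending chain in it starts below some `t i`, hence
lies in the support of `f i`. -/
theorem exists_coeff_eq_of_lt {ι : Type*} (f : ι → HahnSeries Γ R) (t : ι → WithTop Γ)
    (hf : ∀ i j (k : Γ), ↑k < t i → ↑k < t j → (f i).coeff k = (f j).coeff k) :
    ∃ g : HahnSeries Γ R, ∀ i (k : Γ), ↑k < t i → g.coeff k = (f i).coeff k := by
  classical
  let coeff (k : Γ) : R := if h : ∃ i, ↑k < t i then (f h.choose).coeff k else 0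
  have hcoeff : ∀ i (k : Γ), ↑k < t i → coeff k = (f i).coeff k := fun i k hk => by
    have h : ∃ i, ↑k < t i := ⟨i, hk⟩
    simp only [coeff, dif_pos h]
    exact hf _ _ _ h.choose_spec hk
  refine ⟨⟨coeff, (Set.isWF_iff_no_descending_seq.2 fun s hs hmem => ?_).isPWO⟩, hcoeff⟩
  obtain ⟨i, hi⟩ : ∃ i, ↑(s 0) < t i := by
    by_contra h
    exact hmem 0 (dif_neg h)
  refine Set.isWF_iff_no_descending_seq.1 (f i).isWF_support s hs fun n => ?_
  have hn : ↑(s n) < t i := (WithTop.coe_le_coe.2 (hs.antitone n.zero_le)).trans_lt hi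
  show (f i).coeff (s n) ≠ 0
  rw [← hcoeff i (s n) hn]
  exact hmem n

/-- The valuation `Val v` with its two components swapped, so that it takes values in the
lexicographic order of `Γ ×ₗ Γ₀` (see `vLt_pLt_val_iff`). -/
noncomputable def lexVal (v : R → Γ₀) (f : HahnSeries Γ R) : WithTop (Γ ×ₗ Γ₀) :=
  f.orderTop.map fun g => toLex (g, v (f.coeff g))

variable {v : R → Γ₀} {f f' : HahnSeries Γ R} {g : Γ}

@[simp]
theorem lexVal_zero : lexVal v (0 : HahnSeries Γ R) = ⊤ := by
  simp [lexVal]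

theorem lexVal_of_orderTop_eq (h : f.orderTop = g) : lexVal v f = toLex (g, v (f.coeff g)) := by
  simp [lexVal, h]

theorem ne_zero_of_lexVal_lt [Preorder Γ₀] {x : WithTop (Γ ×ₗ Γ₀)} (h : lexVal v f < x) :
    f ≠ 0 := by
  rintro rfl
  simp at h

theorem map_fst_lexVal : (lexVal v f).map (fun p => (ofLex p).1) = f.orderTop := by
  cases h : f.orderTop <;> simp [lexVal, h]

theorem orderTop_eq_of_lexVal_eq (h : lexVal v f = lexVal v f') : f.orderTop = f'.orderTop := by
  rw [← map_fst_lexVal (v := v), h, map_fst_lexVal]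

theorem orderTop_le_of_lexVal_le [Preorder Γ₀] (h : lexVal v f ≤ lexVal v f') :
    f.orderTop ≤ f'.orderTop := by
  rw [← map_fst_lexVal (v := v), ← map_fst_lexVal (v := v) (f := f')]
  exact Prod.Lex.monotone_fst_ofLex.withTop_map h

theorem lexVal_congr_of_coeff_eq (hf : f.orderTop = g) (h : ∀ k ≤ g, f'.coeff k = f.coeff k) :
    lexVal v f' = lexVal v f := by
  have hf' : f'.orderTop = g := orderTop_eq_of_coeff_ne_zero (h g le_rfl ▸ coeff_orderTop_ne hf)
    fun k hk => (h k hk.le).trans (coeff_eq_zero_of_lt_orderTop (hf ▸ WithTop.coe_lt_coe.2 hk))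
  rw [lexVal_of_orderTop_eq hf, lexVal_of_orderTop_eq hf', h g le_rfl]

end Zero

section Valuation

variable {K Γ₀ : Type*} [Field K] [LinearOrderedAddCommMonoidWithTop Γ₀]

theorem coeff_eq_zero_and_lt_of_lt_lexVal (v : AddValuation K Γ₀) {y : HahnSeries Γ K} {g : Γ}
    {z : Γ₀} (hz : z < ⊤) (h : ((toLex (g, z) : Γ ×ₗ Γ₀) : WithTop (Γ ×ₗ Γ₀)) < lexVal v y) :
    (∀ k < g, y.coeff k = 0) ∧ z < v (y.coeff g) := by
  rcases eq_or_ne y 0 with rfl | hy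
  · simpa using hz
  obtain ⟨g', hg'⟩ := WithTop.ne_top_iff_exists.1 (orderTop_ne_top.2 hy)
  have hzero : ∀ k < g', y.coeff k = 0 := fun k hk =>
    coeff_eq_zero_of_lt_orderTop (hg' ▸ WithTop.coe_lt_coe.2 hk)
  rw [lexVal_of_orderTop_eq hg'.symm, WithTop.coe_lt_coe, Prod.Lex.toLex_lt_toLex] at h
  rcases h with hlt | ⟨rfl, hlt⟩
  · exact ⟨fun k hk => hzero k (hk.trans hlt), by rwa [hzero g hlt, v.map_zero]⟩
  · exact ⟨hzero, hlt⟩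

variable [Nontrivial Γ₀]

theorem lexVal_add_eq_left (v : AddValuation K Γ₀) {x y : HahnSeries Γ K}
    (h : lexVal v x < lexVal v y) : lexVal v (x + y) = lexVal v x := by
  obtain ⟨g, hg⟩ := WithTop.ne_top_iff_exists.1 (orderTop_ne_top.2 (ne_zero_of_lexVal_lt h))
  have hxg : v (x.coeff g) < ⊤ := lt_top_iff_ne_top.2 (v.ne_top_iff.2 (coeff_orderTop_ne hg.symm))
  rw [lexVal_of_orderTop_eq hg.symm] at h ⊢
  obtain ⟨hy, hlt⟩ := coeff_eq_zero_and_lt_of_lt_lexVal v hxg h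
  have hsum : v ((x + y).coeff g) = v (x.coeff g) := by
    rw [coeff_add]
    exact v.map_add_eq_of_lt_left hlt
  have hxyg : (x + y).coeff g ≠ 0 := by
    rw [← v.ne_top_iff, hsum]
    exact hxg.ne
  have hbelow : ∀ k < g, (x + y).coeff k = 0 := fun k hk => by
    rw [coeff_add, coeff_eq_zero_of_lt_orderTop (hg ▸ WithTop.coe_lt_coe.2 hk), hy k hk, add_zero]
  rw [lexVal_of_orderTop_eq (orderTop_eq_of_coeff_ne_zero hxyg hbelow), hsum]

variable {v : AddValuation K Γ₀} {c : ℕ → HahnSeries Γ K} {N M i j : ℕ}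

theorem lexVal_sub_eq (hc : IsPseudoCauchyFrom (lexVal v) c N) (hi : N ≤ i) (hij : i < j) :
    lexVal v (c j - c i) = lexVal v (c (i + 1) - c i) :=
  hc.apply_sub_eq (fun _ _ => lexVal_add_eq_left v) hi hij

theorem lexVal_sub_succ_lt (hc : IsPseudoCauchyFrom (lexVal v) c N) (hi : N ≤ i) (hij : i < j) :
    lexVal v (c (i + 1) - c i) < lexVal v (c (j + 1) - c j) :=
  hc.apply_sub_succ_lt (fun _ _ => lexVal_add_eq_left v) hi hij

theorem coeff_eq_of_lt_orderTop_sub (hc : IsPseudoCauchyFrom (lexVal v) c N) (hi : N ≤ i)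
    (hij : i ≤ j) {k : Γ} (hk : ↑k < (c (i + 1) - c i).orderTop) :
    (c j).coeff k = (c i).coeff k := by
  rcases hij.eq_or_lt with rfl | hij
  · rfl
  rw [← orderTop_eq_of_lexVal_eq (lexVal_sub_eq hc hi hij)] at hk
  simpa [sub_eq_zero] using coeff_eq_zero_of_lt_orderTop hk

theorem orderTop_sub_succ_mono (hc : IsPseudoCauchyFrom (lexVal v) c N) (hi : N ≤ i)
    (hij : i ≤ j) : (c (i + 1) - c i).orderTop ≤ (c (j + 1) - c j).orderTop := by
  rcases hij.eq_or_lt with rfl | hij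
  · rfl
  exact orderTop_le_of_lexVal_le (lexVal_sub_succ_lt hc hi hij).le

theorem isPseudoLimit_of_lexVal_sub_eq (hc : IsPseudoCauchyFrom (lexVal v) c N) (hM : N ≤ M)
    {b : HahnSeries Γ K} (hb : ∀ i, M ≤ i → lexVal v (b - c i) = lexVal v (c (i + 1) - c i)) :
    IsPseudoLimit (lexVal v) c b :=
  ⟨M, fun i j hi hij => by
    rw [hb i hi, hb j (hi.trans hij.le)]
    exact lexVal_sub_succ_lt hc (hM.trans hi) hij⟩

theorem exists_isPseudoLimit_of_forall_orderTop_lt (hc : IsPseudoCauchyFrom (lexVal v) c N)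
    (hlt : ∀ i, N ≤ i → ∃ j, i < j ∧ (c (i + 1) - c i).orderTop < (c (j + 1) - c j).orderTop) :
    ∃ b, IsPseudoLimit (lexVal v) c b := by
  obtain ⟨b, hb⟩ := exists_coeff_eq_of_lt (fun i : {i // N ≤ i} => c i)
    (fun i => (c (i + 1) - c i).orderTop) fun i j k hi hj => by
      rcases le_total (i : ℕ) j with h | h
      · exact (coeff_eq_of_lt_orderTop_sub hc i.2 h hi).symm
      · exact coeff_eq_of_lt_orderTop_sub hc j.2 h hj
  refine ⟨b, isPseudoLimit_of_lexVal_sub_eq hc le_rfl fun i hi => ?_⟩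
  obtain ⟨j, hij, hj⟩ := hlt i hi
  have hord := orderTop_eq_of_lexVal_eq (lexVal_sub_eq hc hi hij)
  obtain ⟨g, hg⟩ := WithTop.ne_top_iff_exists.1
    (orderTop_ne_top.2 (ne_zero_of_lexVal_lt (lexVal_sub_succ_lt hc hi (lt_add_one i))))
  rw [← lexVal_sub_eq hc hi hij]
  refine lexVal_congr_of_coeff_eq (hord.trans hg.symm) fun k hk => ?_
  rw [coeff_sub, coeff_sub,
    hb ⟨j, hi.trans hij.le⟩ k ((WithTop.coe_le_coe.2 hk).trans_lt (hg ▸ hj))]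

theorem exists_isPseudoLimit_of_orderTop_eq
    (hK : ∀ a : ℕ → K, IsPseudoCauchy v a → ∃ r, IsPseudoLimit v a r)
    (hc : IsPseudoCauchyFrom (lexVal v) c N) (hM : N ≤ M) {g : Γ}
    (hg : ∀ j, M ≤ j → (c (j + 1) - c j).orderTop = g) : ∃ b, IsPseudoLimit (lexVal v) c b := by
  have hcg : ∀ i j, M ≤ i → i < j →
      lexVal v (c j - c i) = toLex (g, v ((c j).coeff g - (c i).coeff g)) := fun i j hi hij => by
    rw [lexVal_of_orderTop_eq ((orderTop_eq_of_lexVal_eq (lexVal_sub_eq hc (hM.trans hi) hij)).trans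
      (hg i hi)), coeff_sub]
  obtain ⟨r, N', hr⟩ := hK (fun i => (c i).coeff g) ⟨M, fun i j k hi hij hjk => by
    simpa [hcg i j hi hij, hcg j k (hi.trans hij.le) hjk, Prod.Lex.toLex_lt_toLex] using
      hc i j k (hM.trans hi) hij hjk⟩
  set b := truncLT g (c M) + single g r
  have hb : ∀ i, max M N' ≤ i → lexVal v (b - c i) = toLex (g, v (r - (c i).coeff g)) := by
    intro i hi
    have hbelow : ∀ k < g, (b - c i).coeff k = 0 := fun k hk => by
      rw [coeff_sub, coeff_add, coeff_truncLT_of_lt hk, coeff_single_of_ne hk.ne, add_zero,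
        coeff_eq_of_lt_orderTop_sub hc hM ((le_max_left _ _).trans hi)
          ((hg M le_rfl).symm ▸ WithTop.coe_lt_coe.2 hk), sub_self]
    have hbg : (b - c i).coeff g = r - (c i).coeff g := by simp [b]
    have hbg0 : (b - c i).coeff g ≠ 0 := by
      rw [hbg, ← v.ne_top_iff]
      exact (hr i (i + 1) ((le_max_right _ _).trans hi) (lt_add_one i)).ne_top
    rw [lexVal_of_orderTop_eq (orderTop_eq_of_coeff_ne_zero hbg0 hbelow), hbg]
  exact ⟨b, max M N', fun i j hi hij => by
    simpa [hb i hi, hb j (hi.trans hij.le), Prod.Lex.toLex_lt_toLex] using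
      hr i j ((le_max_right _ _).trans hi) hij⟩

theorem exists_isPseudoLimit_lexVal
    (hK : ∀ a : ℕ → K, IsPseudoCauchy v a → ∃ r, IsPseudoLimit v a r)
    (hc : IsPseudoCauchy (lexVal v) c) : ∃ b, IsPseudoLimit (lexVal v) c b := by
  obtain ⟨N, hc⟩ := hc
  by_cases hlt : ∀ i, N ≤ i → ∃ j, i < j ∧
      (c (i + 1) - c i).orderTop < (c (j + 1) - c j).orderTop
  · exact exists_isPseudoLimit_of_forall_orderTop_lt hc hlt
  push Not at hlt
  obtain ⟨M, hM, hmax⟩ := hlt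
  obtain ⟨g, hg⟩ := WithTop.ne_top_iff_exists.1
    (orderTop_ne_top.2 (ne_zero_of_lexVal_lt (lexVal_sub_succ_lt hc hM (lt_add_one M))))
  refine exists_isPseudoLimit_of_orderTop_eq hK hc hM (g := g) fun j hj => ?_
  rw [hg]
  rcases hj.eq_or_lt with rfl | hj
  · rfl
  exact le_antisymm (hmax j hj) (orderTop_sub_succ_mono hc hM hj.le)

end Valuation

end HahnSeries

theorem val_eq_map_lexVal {K H A : Type*} [Field K] [AddCommGroup H] [LinearOrder H]
    [IsOrderedAddMonoid H] [AddCommGroup A] [LinearOrder A] [IsOrderedAddMonoid A]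
    (v : K → WithTop A) (f : HahnSeries H K) :
    Val v f = (HahnSeries.lexVal v f).map fun p => ((ofLex p).2, (ofLex p).1) := by
  by_cases hf : f = 0
  · simp [Val, hf]
  · simp [Val, hf, HahnSeries.lexVal, tval, minSupp, HahnSeries.orderTop_of_ne_zero hf]

theorem vLt_pLt_val_iff {K H A : Type*} [Field K] [AddCommGroup H] [LinearOrder H]
    [IsOrderedAddMonoid H] [AddCommGroup A] [LinearOrder A] [IsOrderedAddMonoid A]
    (v : K → WithTop A) (f f' : HahnSeries H K) :
    vLt pLt (Val v f) (Val v f') ↔ HahnSeries.lexVal v f < HahnSeries.lexVal v f' := by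
  rw [val_eq_map_lexVal, val_eq_map_lexVal]
  exact vLt_map_iff _ (fun _ _ => Prod.Lex.lt_iff.symm) _ _

theorem twisted_hahn_series_pseudo_complete_general
    {K H A : Type*} [Field K]
    [AddCommGroup H] [LinearOrder H] [IsOrderedAddMonoid H] [AddCommGroup A] [LinearOrder A] [IsOrderedAddMonoid A]
    (v : K → WithTop A)
    (hv_top : ∀ x : K, v x = ⊤ ↔ x = 0)
    (hv_mul : ∀ x y : K, v (x * y) = v x + v y)
    (hv_add : ∀ x y : K, min (v x) (v y) ≤ v (x + y))
    (hKpc : ∀ c : ℕ → K,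
      (∃ N : ℕ, ∀ i j k : ℕ, N ≤ i → i < j → j < k → v (c j - c i) < v (c k - c j)) →
      ∃ b : K, ∃ N : ℕ, ∀ i j : ℕ, N ≤ i → i < j → v (b - c i) < v (b - c j)) :
    ∀ c : ℕ → HahnSeries H K,
      (∃ N : ℕ, ∀ i j k : ℕ, N ≤ i → i < j → j < k →
        vLt pLt (Val v (c j - c i)) (Val v (c k - c j))) →
      ∃ b : HahnSeries H K, ∃ N : ℕ, ∀ i j : ℕ, N ≤ i → i < j →
        vLt pLt (Val v (b - c i)) (Val v (b - c j)) := by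
  let w : AddValuation K (WithTop A) := AddValuation.of v ((hv_top 0).2 rfl)
    (WithTop.apply_one_eq_zero_of_map_mul ((hv_top 1).not.2 one_ne_zero) hv_mul) hv_add hv_mul
  have hw : ⇑w = v := rfl
  rintro c ⟨N, hc⟩
  obtain ⟨b, hb⟩ := HahnSeries.exists_isPseudoLimit_lexVal (v := w) hKpc
    ⟨N, by simpa only [hw, IsPseudoCauchyFrom, vLt_pLt_val_iff] using hc⟩
  exact ⟨b, by simpa only [hw, IsPseudoLimit, vLt_pLt_val_iff] using hb⟩

/-- If `(K, v)` is ω-pseudo complete, then the twisted Hahn series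
field `K(t^H,β)` with the valuation `val f = (v (f.coeff h₀), h₀)`,
`h₀ = min supp f`, is ω-pseudo complete: every pseudo-Cauchy sequence has a
pseudo-limit. -/
theorem twisted_hahn_series_pseudo_complete
    {K H A : Type*} [Field K]
    [AddCommGroup H] [LinearOrder H] [IsOrderedAddMonoid H] [AddCommGroup A] [LinearOrder A] [IsOrderedAddMonoid A]
    (v : K → WithTop A)
    (hv_top : ∀ x : K, v x = ⊤ ↔ x = 0)
    (hv_mul : ∀ x y : K, v (x * y) = v x + v y)
    (hv_add : ∀ x y : K, min (v x) (v y) ≤ v (x + y))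
    (hv_surj : ∀ a : A, ∃ x : K, v x = (a : WithTop A))
    (σ : A → Kˣ) (hσ : ∀ a a' : A, σ (a + a') = σ a * σ a')
    (hσ_cross : ∀ a : A, v ((σ a : K)) = (a : WithTop A))
    (β : H → H → A)
    (hβsymm : ∀ h h' : H, β h h' = β h' h)
    (hβnorm : ∀ h : H, β h 0 = 0 ∧ β 0 h = 0)
    (hβcoc : ∀ h h' h'' : H, β h h' + β (h + h') h'' = β h' h'' + β h (h' + h''))
    (hKpc : ∀ c : ℕ → K,
      (∃ N : ℕ, ∀ i j k : ℕ, N ≤ i → i < j → j < k → v (c j - c i) < v (c k - c j)) →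
      ∃ b : K, ∃ N : ℕ, ∀ i j : ℕ, N ≤ i → i < j → v (b - c i) < v (b - c j)) :
    ∀ c : ℕ → HahnSeries H K,
      (∃ N : ℕ, ∀ i j k : ℕ, N ≤ i → i < j → j < k →
        vLt pLt (Val v (c j - c i)) (Val v (c k - c j))) →
      ∃ b : HahnSeries H K, ∃ N : ℕ, ∀ i j : ℕ, N ≤ i → i < j →
        vLt pLt (Val v (b - c i)) (Val v (b - c j)) :=
  twisted_hahn_series_pseudo_complete_general v hv_top hv_mul hv_add hKpc
end

section
/- There exists a linearly ordered abelian group G with a smallest positive element e (i.e. G is a Z-group: for every integer n ≥ 1 and every g ∈ G there is exactly one k ∈ {0, 1, …, n−1} such that g − k·e ∈ nG) such that the cyclic subgroup generated by e is not a direct summand of G: there is no subgroup B of G with ⟨e⟩ ∩ B = {0} and ⟨e⟩ + B = G. -/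
/-!
Let `a N = ∑ k < N, k!` and let `G ≤ ℚ ×ₗ ℚ` be generated by `e = (0, 1)` and the elements
`g N = (1 / N!, a N / N!)`, which satisfy `(N + 1) • g (N + 1) = g N + e`. The first
projection maps `G` onto `ℚ` with kernel `ℤ e`; hence `e` is the least positive element, and
divisibility of `ℚ` gives every class modulo `n G` a representative `k • e` with `k < n`.
A complement of `ℤ e` would yield a retraction onto `ℤ e`, i.e. integers `z N` with
`(N + 1) z (N + 1) = z N + 1`, and their absolute values would decrease forever.
-/

open Nat Finset Filter AddSubgroup

theorem not_forall_succ_mul_eq_add_one (z : ℕ → ℤ) :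
    ¬∀ N : ℕ, ((N : ℤ) + 1) * z (N + 1) = z N + 1 := by
  intro hz
  have hne : ∀ N, z (N + 1) ≠ 0 := by
    intro N h0
    have h := hz (N + 1)
    rw [h0, zero_add] at h
    have := Int.eq_one_of_mul_eq_one_right (by omega) h
    omega
  have hdec : ∀ N, (z (N + 1 + 2)).natAbs < (z (N + 2)).natAbs := by
    intro N
    have h : ((N + 3 : ℕ) : ℤ) * z (N + 3) = z (N + 2) + 1 := by exact_mod_cast hz (N + 2)
    replace h := congrArg Int.natAbs h
    rw [Int.natAbs_mul, Int.natAbs_natCast] at h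
    have h1 := Int.natAbs_add_le (z (N + 2)) 1
    have h2 : 0 < (z (N + 3)).natAbs := Int.natAbs_pos.2 (hne (N + 2))
    simp only [Int.natAbs_one] at h1
    nlinarith
  exact not_strictAnti_of_wellFoundedLT _
    (strictAnti_nat_of_succ_lt (f := fun N => (z (N + 2)).natAbs) hdec)

theorem not_exists_complement_zmultiples {G : Type*} [AddCommGroup G] {e : G}
    (he : ¬IsOfFinAddOrder e) (g : ℕ → G) (hg : ∀ N : ℕ, ((N : ℤ) + 1) • g (N + 1) = g N + e) :
    ¬∃ B : AddSubgroup G, zmultiples e ⊓ B = ⊥ ∧ zmultiples e ⊔ B = ⊤ := by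
  rintro ⟨B, hinf, hsup⟩
  have hdecomp : ∀ x : G, ∃ z : ℤ, x - z • e ∈ B := by
    intro x
    obtain ⟨_, ⟨z, rfl⟩, b, hb, hx⟩ := mem_sup.1 (hsup ▸ mem_top x)
    exact ⟨z, by rwa [← hx, add_sub_cancel_left]⟩
  choose z hz using fun N => hdecomp (g N)
  refine not_forall_succ_mul_eq_add_one z fun N =>
    injective_zsmul_iff_not_isOfFinAddOrder.2 he ?_
  have hB : (((N : ℤ) + 1) * z (N + 1) - (z N + 1)) • e ∈ B := by
    convert sub_mem (hz N) (zsmul_mem (hz (N + 1)) ((N : ℤ) + 1)) using 1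
    rw [smul_sub, hg]
    simp only [sub_smul, add_smul, mul_smul, one_smul]
    abel
  have h0 : (((N : ℤ) + 1) * z (N + 1) - (z N + 1)) • e = 0 :=
    mem_bot.1 (hinf ▸ mem_inf.2 ⟨zsmul_mem_zmultiples _ _, hB⟩)
  simpa only [sub_smul, sub_eq_zero] using h0

section ZGroup

variable {G Q : Type*} [AddCommGroup G] [AddCommGroup Q] [Module ℚ Q] {f : G →+ Q} {e : G}

theorem dvd_of_zsmul_eq_nsmul (hker : f.ker = zmultiples e) (he : ¬IsOfFinAddOrder e)
    {n : ℕ} (hn : n ≠ 0) {c : ℤ} {x : G} (h : c • e = n • x) : (n : ℤ) ∣ c := by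
  have hfe : f e = 0 := f.mem_ker.1 (hker ▸ mem_zmultiples e)
  have hfx : (n : ℚ) • f x = 0 := by
    rw [Nat.cast_smul_eq_nsmul, ← map_nsmul, ← h, map_zsmul, hfe, smul_zero]
  obtain ⟨i, rfl⟩ := mem_zmultiples_iff.1 <|
    hker ▸ f.mem_ker.2 ((smul_eq_zero.1 hfx).resolve_left (by exact_mod_cast hn))
  refine ⟨i, injective_zsmul_iff_not_isOfFinAddOrder.2 he ?_⟩
  simp only [h, mul_smul, natCast_zsmul]

theorem existsUnique_sub_nsmul_eq_nsmul (hf : Function.Surjective f)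
    (hker : f.ker = zmultiples e) (he : ¬IsOfFinAddOrder e) {n : ℕ} (hn : 1 ≤ n) (g : G) :
    ∃! k : ℕ, k < n ∧ ∃ g' : G, g - k • e = n • g' := by
  obtain ⟨h, hh⟩ := hf ((n : ℚ)⁻¹ • f g)
  have hmem : g - n • h ∈ zmultiples e := by
    rw [← hker, f.mem_ker, map_sub, map_nsmul, hh, ← Nat.cast_smul_eq_nsmul ℚ,
      smul_inv_smul₀ (by positivity), sub_self]
  obtain ⟨j, hj⟩ := mem_zmultiples_iff.1 hmem
  have hg : g = n • h + j • e := by rw [hj]; abel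
  set q := j / n
  set r := (j % n).toNat
  have hrn : r < n := by have := Int.emod_lt_of_pos j (by omega : (0 : ℤ) < n); omega
  have hj' : j = n * q + r := by
    rw [Int.toNat_of_nonneg (Int.emod_nonneg j (by omega)), Int.mul_ediv_add_emod]
  have hgr : g - r • e = n • (h + q • e) := by
    rw [hg, hj', ← natCast_zsmul, ← natCast_zsmul, ← natCast_zsmul]
    module
  refine ⟨r, ⟨hrn, h + q • e, hgr⟩, ?_⟩
  rintro k ⟨hk, g', hg'⟩
  have hdiff : ((r : ℤ) - k) • e = n • (g' - (h + q • e)) := by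
    rw [nsmul_sub, ← hg', ← hgr, sub_smul, natCast_zsmul, natCast_zsmul]
    abel
  have := Int.eq_zero_of_abs_lt_dvd (dvd_of_zsmul_eq_nsmul hker he (by omega) hdiff)
    (abs_lt.2 ⟨by omega, by omega⟩)
  omega

end ZGroup

theorem toLex_zero_one_le {A : Type*} [Preorder A] [Zero A] {p : A ×ₗ ℚ} (hp : 0 < p)
    (hint : (ofLex p).1 = 0 → ∃ z : ℤ, (ofLex p).2 = z) : toLex (0, 1) ≤ p := by
  obtain ⟨⟨a, y⟩, rfl⟩ := toLex.surjective p
  rcases Prod.Lex.toLex_lt_toLex.1 hp with ha | ⟨rfl, hy⟩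
  · exact (Prod.Lex.toLex_lt_toLex (x := (0, 1)).2 (Or.inl ha)).le
  · obtain ⟨z, rfl⟩ := hint rfl
    have hz : (0 : ℚ) < z := hy
    have hz' : (1 : ℚ) ≤ z := by exact_mod_cast Int.cast_pos.1 hz
    exact Prod.Lex.toLex_le_toLex.2 (Or.inr ⟨rfl, hz'⟩)

def factorialSum (n : ℕ) : ℕ := ∑ k ∈ range n, k !

theorem factorialSum_succ (n : ℕ) : factorialSum (n + 1) = factorialSum n + n ! :=
  sum_range_succ _ n

theorem factorial_dvd_factorialSum_sub {M N : ℕ} (h : M ≤ N) :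
    (M ! : ℤ) ∣ factorialSum N - factorialSum M := by
  rw [factorialSum, factorialSum, ← sum_range_add_sum_Ico _ h]
  push_cast
  rw [add_sub_cancel_left]
  exact dvd_sum fun k hk => by exact_mod_cast factorial_dvd_factorial (mem_Ico.1 hk).1

/-- `(x, y)` lies in the subgroup generated by `(0, 1)` and `(1 / N!, a N / N!)` iff
`N! x ∈ ℤ` and `y - a N x ∈ ℤ`; these subgroups increase with `N`. -/
def factorialGroup : AddSubgroup (ℚ ×ₗ ℚ) where
  carrier := {p | ∀ᶠ N in atTop, (N ! : ℚ) * (ofLex p).1 ∈ zmultiples 1 ∧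
    (ofLex p).2 - factorialSum N * (ofLex p).1 ∈ zmultiples 1}
  zero_mem' := Eventually.of_forall fun N => by simp
  add_mem' {p q} hp hq := by
    filter_upwards [hp, hq] with N ⟨hp₁, hp₂⟩ ⟨hq₁, hq₂⟩
    constructor
    · convert add_mem hp₁ hq₁ using 1
      simp only [ofLex_add, Prod.fst_add]
      ring
    · convert add_mem hp₂ hq₂ using 1
      simp only [ofLex_add, Prod.fst_add, Prod.snd_add]
      ring
  neg_mem' {p} hp := by
    filter_upwards [hp] with N ⟨hp₁, hp₂⟩
    constructor
    · convert neg_mem hp₁ using 1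
      simp only [ofLex_neg, Prod.fst_neg]
      ring
    · convert neg_mem hp₂ using 1
      simp only [ofLex_neg, Prod.fst_neg, Prod.snd_neg]
      ring

namespace factorialGroup

theorem toLex_mem {M : ℕ} {x : ℚ} (hx : (M ! : ℚ) * x ∈ zmultiples 1) :
    toLex (x, (factorialSum M : ℚ) * x) ∈ factorialGroup := by
  filter_upwards [eventually_ge_atTop M] with N hN
  obtain ⟨t, ht⟩ := factorial_dvd_factorial hN
  obtain ⟨s, hs⟩ := factorial_dvd_factorialSum_sub hN
  have hs' : (factorialSum N : ℚ) = factorialSum M + M ! * s := by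
    rw [← sub_eq_iff_eq_add']
    exact_mod_cast hs
  constructor
  · convert zsmul_mem hx t using 1
    simp only [ofLex_toLex, ht, cast_mul, zsmul_eq_mul, Int.cast_natCast]
    ring
  · convert zsmul_mem hx (-s) using 1
    simp only [ofLex_toLex, hs', zsmul_eq_mul]
    push_cast
    ring

theorem exists_int_snd {p : ℚ ×ₗ ℚ} (hp : p ∈ factorialGroup) (h : (ofLex p).1 = 0) :
    ∃ z : ℤ, (ofLex p).2 = z := by
  obtain ⟨N, -, hN⟩ := hp.exists
  obtain ⟨z, hz⟩ := mem_zmultiples_iff.1 hN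
  exact ⟨z, by simpa [h] using hz.symm⟩

theorem ext_ofLex {p q : factorialGroup} (h₁ : (ofLex p.1).1 = (ofLex q.1).1)
    (h₂ : (ofLex p.1).2 = (ofLex q.1).2) : p = q :=
  Subtype.ext (ofLex.injective (Prod.ext h₁ h₂))

def e : factorialGroup :=
  ⟨toLex (0, 1), Eventually.of_forall fun N => by simp⟩

def gen (N : ℕ) : factorialGroup :=
  ⟨toLex ((N ! : ℚ)⁻¹, factorialSum N * (N ! : ℚ)⁻¹),
    toLex_mem (by simp [N.factorial_ne_zero])⟩

theorem succ_zsmul_gen_succ (N : ℕ) : ((N : ℤ) + 1) • gen (N + 1) = gen N + e := by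
  have h := N.factorial_ne_zero
  apply ext_ofLex
  · change ((N : ℤ) + 1) • ((N + 1)! : ℚ)⁻¹ = (N ! : ℚ)⁻¹ + 0
    rw [add_zero, zsmul_eq_mul, factorial_succ]
    push_cast
    field_simp
  · change ((N : ℤ) + 1) • (factorialSum (N + 1) * ((N + 1)! : ℚ)⁻¹)
      = factorialSum N * (N ! : ℚ)⁻¹ + 1
    rw [zsmul_eq_mul, factorial_succ, factorialSum_succ]
    push_cast
    field_simp

theorem e_pos : 0 < e :=
  Prod.Lex.toLex_lt_toLex.2 (Or.inr ⟨rfl, zero_lt_one⟩)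

theorem e_le_of_pos (g : factorialGroup) (hg : 0 < g) : e ≤ g :=
  toLex_zero_one_le hg (exists_int_snd g.2)

theorem not_isOfFinAddOrder_e : ¬IsOfFinAddOrder e :=
  not_isOfFinAddOrder_of_isAddTorsionFree e_pos.ne'

def fst : factorialGroup →+ ℚ :=
  (AddMonoidHom.fst ℚ ℚ).comp
    ((ofLexAddEquiv (ℚ × ℚ)).toAddMonoidHom.comp factorialGroup.subtype)

theorem fst_surjective : Function.Surjective fst := by
  intro x
  obtain ⟨t, ht⟩ := Nat.dvd_factorial x.pos le_rfl
  refine ⟨⟨_, toLex_mem (M := x.den) (mem_zmultiples_iff.2 ⟨x.num * t, ?_⟩)⟩, rfl⟩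
  rw [zsmul_one, ht]
  push_cast
  rw [← x.mul_den_eq_num]
  ring

theorem ker_fst : fst.ker = zmultiples e := by
  ext g
  rw [AddMonoidHom.mem_ker, mem_zmultiples_iff]
  constructor
  · intro hg
    obtain ⟨z, hz⟩ := exists_int_snd g.2 hg
    refine ⟨z, ext_ofLex ?_ ?_⟩
    · change z • (0 : ℚ) = (ofLex g.1).1
      rw [smul_zero]
      exact hg.symm
    · simpa [e] using hz.symm
  · rintro ⟨z, rfl⟩
    simp [fst, e]

end factorialGroup

/-- STATEMENT 15: There exists a linearly ordered abelian group `G` with a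
smallest positive element `e` which is a Z-group (for every `n ≥ 1` and `g ∈ G`
there is exactly one `k ∈ {0, …, n-1}` with `g - k • e ∈ nG`), and such that the
cyclic subgroup generated by `e` is not a direct summand of `G`: there is no
subgroup `B` with `⟨e⟩ ⊓ B = ⊥` and `⟨e⟩ ⊔ B = ⊤`. -/
theorem zgroup_not_split :
    ∃ (G : Type) (inst : AddCommGroup G) (instOrd : LinearOrder G)
      (_ : IsOrderedAddMonoid G) (e : G),
      letI := inst
      (0 < e ∧ (∀ g : G, 0 < g → e ≤ g)) ∧
      (∀ n : ℕ, 1 ≤ n → ∀ g : G,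
        ∃! k : ℕ, k < n ∧ ∃ g' : G, g - (k : ℕ) • e = (n : ℕ) • g') ∧
      ¬ ∃ B : AddSubgroup G,
          (AddSubgroup.zmultiples e) ⊓ B = ⊥ ∧ (AddSubgroup.zmultiples e) ⊔ B = ⊤ := by
  open factorialGroup in
  exact ⟨factorialGroup, inferInstance, inferInstance, inferInstance, e, ⟨e_pos, e_le_of_pos⟩,
    fun n hn => existsUnique_sub_nsmul_eq_nsmul fst_surjective ker_fst not_isOfFinAddOrder_e hn,
    not_exists_complement_zmultiples not_isOfFinAddOrder_e gen succ_zsmul_gen_succ⟩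
end
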